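/- In the extended Schrödinger-Virasoro algebra sv~, for all m₁,...,m_t ∈ ℤ and b_{m₁},...,b_{m_t} ∈ ℂ: exp(b_{m₁} ad Y_{m₁+1/2}) ∘ ⋯ ∘ exp(b_{m_t} ad Y_{m_t+1/2}) = exp(Σ_k b_{m_k} ad Y_{m_k+1/2}) ∘ exp(Σ_{1≤i<j≤t} ((m_i−m_j)/2) b_{m_i} b_{m_j} ad M_{m_i+m_j+1}). -/

import Mathlib

/-- Index type for the basis of the extended Schrödinger-Virasoro Lie algebra.
`Y n` stands for the generator `Y_{n+1/2}`. -/
inductive SVIdx : Type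
  | L : ℤ → SVIdx
  | M : ℤ → SVIdx
  | N : ℤ → SVIdx
  | Y : ℤ → SVIdx

/-- A complex Lie algebra `g` is (a copy of) the extended Schrödinger-Virasoro
Lie algebra if it has a basis indexed by `SVIdx` whose brackets are given by the
structure constants of `sv~`. -/
structure ExtSV (g : Type*) [LieRing g] [LieAlgebra ℂ g] where
  b : Module.Basis SVIdx ℂ g
  LL : ∀ m n : ℤ, ⁅b (SVIdx.L m), b (SVIdx.L n)⁆ = ((n : ℂ) - (m : ℂ)) • b (SVIdx.L (m + n))
  MM : ∀ m n : ℤ, ⁅b (SVIdx.M m), b (SVIdx.M n)⁆ = 0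
  NN : ∀ m n : ℤ, ⁅b (SVIdx.N m), b (SVIdx.N n)⁆ = 0
  YY : ∀ m n : ℤ, ⁅b (SVIdx.Y m), b (SVIdx.Y n)⁆ = ((m : ℂ) - (n : ℂ)) • b (SVIdx.M (m + n + 1))
  LM : ∀ m n : ℤ, ⁅b (SVIdx.L m), b (SVIdx.M n)⁆ = (n : ℂ) • b (SVIdx.M (m + n))
  LN : ∀ m n : ℤ, ⁅b (SVIdx.L m), b (SVIdx.N n)⁆ = (n : ℂ) • b (SVIdx.N (m + n))
  LY : ∀ m n : ℤ, ⁅b (SVIdx.L m), b (SVIdx.Y n)⁆ =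
      ((n : ℂ) + (1 - (m : ℂ)) / 2) • b (SVIdx.Y (m + n))
  NM : ∀ m n : ℤ, ⁅b (SVIdx.N m), b (SVIdx.M n)⁆ = (2 : ℂ) • b (SVIdx.M (m + n))
  NY : ∀ m n : ℤ, ⁅b (SVIdx.N m), b (SVIdx.Y n)⁆ = b (SVIdx.Y (m + n))
  MY : ∀ m n : ℤ, ⁅b (SVIdx.M m), b (SVIdx.Y n)⁆ = 0

/-- Truncated exponential `exp(A) = 1 + A + A²/2`, valid for operators with `A³ = 0`. -/
noncomputable def truncExp {g : Type*} [LieRing g] [LieAlgebra ℂ g]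
    (A : Module.End ℂ g) : Module.End ℂ g :=
  1 + A + ((2 : ℂ)⁻¹) • A ^ 2

/-!
The operators `ad Y_n` span a subspace `P` of `End sv~` with `P * P * P = 0`: `ad Y` maps
everything into `span {Y, M}`, then into `span {M}`, which it kills. On such a `P` the
Baker–Campbell–Hausdorff series stops after the commutator term,
`exp a * exp b = exp (a + b) + ½ [a, b]`, and any `c ∈ P * P` satisfies
`exp a * exp c = exp a + c`; induction on `t` gives the product formula, and
`[ad Y_p, ad Y_q] = (p - q) ad M_{p+q+1}` identifies the correction term.
-/

section CubeZero

variable {R A : Type*} [CommSemiring R] [Semiring A] [Algebra R A] {P : Submodule R A}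

theorem Submodule.mul_mul_eq_zero_of_mem (hP : P * P * P = ⊥) {a b c : A}
    (ha : a ∈ P) (hb : b ∈ P) (hc : c ∈ P) : a * b * c = 0 := by
  simpa [hP] using mul_mem_mul (mul_mem_mul ha hb) hc

theorem Submodule.mul_eq_zero_of_mem_of_mem_mul (hP : P * P * P = ⊥) {a c : A}
    (ha : a ∈ P) (hc : c ∈ P * P) : a * c = 0 := by
  simpa [← mul_assoc, hP] using mul_mem_mul ha hc

theorem Submodule.mul_eq_zero_of_mem_mul_of_mem_mul (hP : P * P * P = ⊥) {c d : A}
    (hc : c ∈ P * P) (hd : d ∈ P * P) : c * d = 0 := by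
  simpa [← mul_assoc, hP] using mul_mem_mul hc hd

end CubeZero

section TruncExp

variable {g : Type*} [LieRing g] [LieAlgebra ℂ g]

theorem truncExp_mul_truncExp_eq_add_half_commutator {a b : Module.End ℂ g}
    (habb : a * (b * b) = 0) (haab : a * (a * b) = 0) :
    truncExp a * truncExp b = truncExp (a + b) + (2⁻¹ : ℂ) • (a * b - b * a) := by
  simp only [truncExp, pow_two, mul_add, add_mul, mul_one, one_mul, mul_smul_comm,
    smul_mul_assoc, smul_add, mul_assoc, habb, haab, mul_zero, smul_zero, add_zero]
  module

theorem truncExp_mul_of_mul_eq_zero {a c : Module.End ℂ g} (hac : a * c = 0) :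
    truncExp a * c = c := by
  simp [truncExp, pow_two, add_mul, mul_assoc, hac]

theorem truncExp_mul_truncExp_of_mul_eq_zero {a c : Module.End ℂ g} (hac : a * c = 0)
    (hcc : c * c = 0) : truncExp a * truncExp c = truncExp a + c := by
  rw [truncExp.eq_def c, mul_add, mul_add, mul_one, truncExp_mul_of_mul_eq_zero hac, pow_two,
    mul_smul_comm, ← mul_assoc, truncExp_mul_of_mul_eq_zero hac, hcc, smul_zero, add_zero]

end TruncExp

theorem Fin.sum_sum_ite_lt_succ {M : Type*} [AddCommMonoid M] {t : ℕ}
    (f : Fin (t + 1) → Fin (t + 1) → M) :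
    ∑ i, ∑ j, (if i < j then f i j else 0) =
      ∑ j : Fin t, f 0 j.succ + ∑ i : Fin t, ∑ j : Fin t, if i < j then f i.succ j.succ else 0 := by
  simp [Fin.sum_univ_succ, Fin.succ_pos, Fin.succ_lt_succ_iff]

section TruncExpProduct

variable {g : Type*} [LieRing g] [LieAlgebra ℂ g] {P : Submodule ℂ (Module.End ℂ g)}

theorem sum_sum_ite_lt_half_commutator_mem_mul {t : ℕ} {x : Fin t → Module.End ℂ g}
    (hx : ∀ k, x k ∈ P) :
    (∑ i, ∑ j, if i < j then (2⁻¹ : ℂ) • (x i * x j - x j * x i) else 0) ∈ P * P := by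
  refine Submodule.sum_mem _ fun i _ => Submodule.sum_mem _ fun j _ => ?_
  split_ifs
  · exact Submodule.smul_mem _ _ <|
      sub_mem (Submodule.mul_mem_mul (hx i) (hx j)) (Submodule.mul_mem_mul (hx j) (hx i))
  · exact zero_mem _

theorem list_prod_ofFn_truncExp_eq_add (hP : P * P * P = ⊥) {t : ℕ}
    (x : Fin t → Module.End ℂ g) (hx : ∀ k, x k ∈ P) :
    (List.ofFn fun k => truncExp (x k)).prod =
      truncExp (∑ k, x k) +
        ∑ i, ∑ j, if i < j then (2⁻¹ : ℂ) • (x i * x j - x j * x i) else 0 := by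
  induction t with
  | zero => simp [truncExp]
  | succ t ih =>
    set s := ∑ k : Fin t, x k.succ
    have hs : s ∈ P := Submodule.sum_mem _ fun k _ => hx k.succ
    have hbracket : (2⁻¹ : ℂ) • (x 0 * s - s * x 0) =
        ∑ k : Fin t, (2⁻¹ : ℂ) • (x 0 * x k.succ - x k.succ * x 0) := by
      simp only [s, Finset.mul_sum, Finset.sum_mul, ← Finset.sum_sub_distrib, Finset.smul_sum]
    rw [List.ofFn_succ, List.prod_cons, ih _ fun k => hx k.succ, mul_add,
      truncExp_mul_truncExp_eq_add_half_commutator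
        (Submodule.mul_eq_zero_of_mem_of_mem_mul hP (hx 0) (Submodule.mul_mem_mul hs hs))
        (by rw [← mul_assoc]; exact Submodule.mul_mul_eq_zero_of_mem hP (hx 0) (hx 0) hs),
      truncExp_mul_of_mul_eq_zero (Submodule.mul_eq_zero_of_mem_of_mem_mul hP (hx 0)
        (sum_sum_ite_lt_half_commutator_mem_mul fun k => hx k.succ)),
      Fin.sum_univ_succ x, Fin.sum_sum_ite_lt_succ, hbracket, add_assoc]

theorem list_prod_ofFn_truncExp (hP : P * P * P = ⊥) {t : ℕ}
    (x : Fin t → Module.End ℂ g) (hx : ∀ k, x k ∈ P) :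
    (List.ofFn fun k => truncExp (x k)).prod =
      truncExp (∑ k, x k) *
        truncExp (∑ i, ∑ j, if i < j then (2⁻¹ : ℂ) • (x i * x j - x j * x i) else 0) := by
  have hC := sum_sum_ite_lt_half_commutator_mem_mul hx
  rw [list_prod_ofFn_truncExp_eq_add hP x hx, truncExp_mul_truncExp_of_mul_eq_zero
    (Submodule.mul_eq_zero_of_mem_of_mem_mul hP (Submodule.sum_mem _ fun k _ => hx k) hC)
    (Submodule.mul_eq_zero_of_mem_mul_of_mem_mul hP hC hC)]

end TruncExpProduct

open LieAlgebra

namespace ExtSV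

variable {g : Type*} [LieRing g] [LieAlgebra ℂ g] (h : ExtSV g)

theorem ad_Y_mul_ad_Y_mul_ad_Y (p q r : ℤ) :
    ad ℂ g (h.b (.Y p)) * ad ℂ g (h.b (.Y q)) * ad ℂ g (h.b (.Y r)) = 0 := by
  have hYL n k : ⁅h.b (.Y k), h.b (.L n)⁆ = -⁅h.b (.L n), h.b (.Y k)⁆ := (lie_skew _ _).symm
  have hYM n k : ⁅h.b (.Y k), h.b (.M n)⁆ = -⁅h.b (.M n), h.b (.Y k)⁆ := (lie_skew _ _).symm
  have hYN n k : ⁅h.b (.Y k), h.b (.N n)⁆ = -⁅h.b (.N n), h.b (.Y k)⁆ := (lie_skew _ _).symm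
  refine h.b.ext fun i => ?_
  cases i <;> simp [ad_apply, hYL, hYM, hYN, h.LY, h.MY, h.NY, h.YY, lie_smul]

theorem ad_Y_commutator (p q : ℤ) :
    ad ℂ g (h.b (.Y p)) * ad ℂ g (h.b (.Y q)) - ad ℂ g (h.b (.Y q)) * ad ℂ g (h.b (.Y p)) =
      ((p : ℂ) - q) • ad ℂ g (h.b (.M (p + q + 1))) := by
  ext z
  simp [← lie_lie, h.YY, smul_lie]

theorem half_commutator_smul_ad_Y (a b : ℂ) (p q : ℤ) :
    (2⁻¹ : ℂ) • (a • ad ℂ g (h.b (.Y p)) * b • ad ℂ g (h.b (.Y q)) -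
        b • ad ℂ g (h.b (.Y q)) * a • ad ℂ g (h.b (.Y p))) =
      (((p : ℂ) - q) / 2 * a * b) • ad ℂ g (h.b (.M (p + q + 1))) := by
  rw [smul_mul_smul_comm, smul_mul_smul_comm, mul_comm b, ← smul_sub, h.ad_Y_commutator,
    smul_smul, smul_smul]
  congr 1
  ring

noncomputable def adYSpan : Submodule ℂ (Module.End ℂ g) :=
  Submodule.span ℂ (Set.range fun n => ad ℂ g (h.b (.Y n)))

theorem smul_ad_Y_mem_adYSpan (a : ℂ) (p : ℤ) : a • ad ℂ g (h.b (.Y p)) ∈ h.adYSpan :=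
  Submodule.smul_mem _ _ (Submodule.subset_span ⟨p, rfl⟩)

theorem adYSpan_cube_eq_bot : h.adYSpan * h.adYSpan * h.adYSpan = ⊥ := by
  simp only [adYSpan, Submodule.span_mul_span, Submodule.span_eq_bot, Set.mem_mul, Set.mem_range]
  rintro _ ⟨_, ⟨_, ⟨p, rfl⟩, _, ⟨q, rfl⟩, rfl⟩, _, ⟨r, rfl⟩, rfl⟩
  exact h.ad_Y_mul_ad_Y_mul_ad_Y p q r

end ExtSV

open LieAlgebra in
/-- In `sv~`:
`exp(b₁ ad Y_{m₁+1/2}) ∘ ⋯ ∘ exp(b_t ad Y_{m_t+1/2})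
  = exp(Σ_k b_k ad Y_{m_k+1/2}) ∘ exp(Σ_{i<j} ((m_i−m_j)/2) b_i b_j ad M_{m_i+m_j+1})`. -/
theorem extSV_exp_product {g : Type*} [LieRing g] [LieAlgebra ℂ g] (h : ExtSV g)
    (t : ℕ) (m : Fin t → ℤ) (bc : Fin t → ℂ) :
    (List.ofFn fun k : Fin t =>
        truncExp (bc k • ad ℂ g (h.b (SVIdx.Y (m k))))).prod =
      truncExp (∑ k : Fin t, bc k • ad ℂ g (h.b (SVIdx.Y (m k)))) *
        truncExp (∑ i : Fin t, ∑ j : Fin t,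
          if i < j then
            ((((m i : ℂ) - (m j : ℂ)) / 2) * bc i * bc j) •
              ad ℂ g (h.b (SVIdx.M (m i + m j + 1)))
          else 0) := by
  simp only [list_prod_ofFn_truncExp h.adYSpan_cube_eq_bot _ fun k => h.smul_ad_Y_mem_adYSpan _ _,
    h.half_commutator_smul_ad_Y]
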